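/- Let ⋆ be a continuous t-norm on I = [0,1] and △ a binary operation on I. If the convolution ⋏ is a t-norm on L, then 1 △ x = x △ 1 = x for all x ∈ I. -/

import Mathlib

open unitInterval

noncomputable section

instance : Fact ((0:ℝ) ≤ 1) := ⟨zero_le_one⟩

/-- A function `f : I → I` is normal if `sup {f x : x ∈ I} = 1`. -/
def IsNormal (f : I → I) : Prop := sSup (Set.range f) = 1

/-- A function `f : I → I` is convex if `f y ≥ min (f x) (f z)` whenever `x ≤ y ≤ z`. -/
def IsConvexFn (f : I → I) : Prop :=
  ∀ x y z : I, x ≤ y → y ≤ z → min (f x) (f z) ≤ f y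

/-- Membership in `L`, the set of normal convex functions from `I` to `I`. -/
def InL (f : I → I) : Prop := IsNormal f ∧ IsConvexFn f

/-- A t-norm on `I`: commutative, associative, increasing in each argument,
with neutral element `1`. -/
def IsTnorm (op : I → I → I) : Prop :=
  (∀ x y : I, op x y = op y x) ∧
  (∀ x y z : I, op (op x y) z = op x (op y z)) ∧
  (∀ y : I, Monotone fun x => op x y) ∧
  (∀ x : I, Monotone fun y => op x y) ∧
  (∀ x : I, op 1 x = x) ∧ (∀ x : I, op x 1 = x)

/-- A t-conorm on `I`: commutative, associative, increasing in each argument,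
with neutral element `0`. -/
def IsTconorm (op : I → I → I) : Prop :=
  (∀ x y : I, op x y = op y x) ∧
  (∀ x y z : I, op (op x y) z = op x (op y z)) ∧
  (∀ y : I, Monotone fun x => op x y) ∧
  (∀ x : I, Monotone fun y => op x y) ∧
  (∀ x : I, op 0 x = x) ∧ (∀ x : I, op x 0 = x)

/-- Continuity of a binary operation on `I`, as a map `I × I → I`. -/
def IsCont (op : I → I → I) : Prop := Continuous fun p : I × I => op p.1 p.2

/-- The convolution `(f ⋏ g)(x) = sup {f y ⋆ g z : y △ z = x}` (`star` playing the
role of `⋆` and `tri` the role of `△`); the sup of the empty set is `0`. -/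
def conv (star tri : I → I → I) (f g : I → I) : I → I :=
  fun x => sSup {a : I | ∃ y z : I, tri y z = x ∧ a = star (f y) (g z)}

/-- The meet `(f ⊓ g)(x) = sup {min (f y) (g z) : min y z = x}`. -/
def fmeet (f g : I → I) : I → I :=
  fun x => sSup {a : I | ∃ y z : I, min y z = x ∧ a = min (f y) (g z)}

/-- The partial order `f ⊑ g` iff `f ⊓ g = f`. -/
def sqle (f g : I → I) : Prop := fmeet f g = f

/-- The characteristic function `χ_{x}` of the singleton `{x}`. -/
def chi (x : I) : I → I := fun t => if t = x then 1 else 0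

/-- A binary operation `C` on functions is a t-norm on `L` if `L` is closed under `C` and,
on `L`, `C` is commutative, associative, has `χ_{1}` as neutral element, and is increasing
in each argument with respect to `⊑`. -/
def IsTnormOnL (C : (I → I) → (I → I) → (I → I)) : Prop :=
  (∀ f g, InL f → InL g → InL (C f g)) ∧
  (∀ f g, InL f → InL g → C f g = C g f) ∧
  (∀ f g h, InL f → InL g → InL h → C (C f g) h = C f (C g h)) ∧
  (∀ f, InL f → C f (chi 1) = f) ∧
  (∀ f g h, InL f → InL g → InL h → sqle g h → sqle (C f g) (C f h))

/-- A binary operation `C` on functions is a t-conorm on `L` if `L` is closed under `C` and,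
on `L`, `C` is commutative, associative, has `χ_{0}` as neutral element, and is increasing
in each argument with respect to `⊑`. -/
def IsTconormOnL (C : (I → I) → (I → I) → (I → I)) : Prop :=
  (∀ f g, InL f → InL g → InL (C f g)) ∧
  (∀ f g, InL f → InL g → C f g = C g f) ∧
  (∀ f g h, InL f → InL g → InL h → C (C f g) h = C f (C g h)) ∧
  (∀ f, InL f → C f (chi 0) = f) ∧
  (∀ f g h, InL f → InL g → InL h → sqle g h → sqle (C f g) (C f h))

/-- `f^L (x) = sup {f y : y ≤ x}`. -/
def fL (f : I → I) : I → I := fun x => sSup (f '' Set.Iic x)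

/-- `f^R (x) = sup {f y : y ≥ x}`. -/
def fR (f : I → I) : I → I := fun x => sSup (f '' Set.Ici x)

/-- The function `V_x (t) = (x - 1) * t + 1`. -/
def Vfn (x : I) : I → I := fun t =>
  ⟨(x.1 - 1) * t.1 + 1, by
    obtain ⟨hx0, hx1⟩ := x.2; obtain ⟨ht0, ht1⟩ := t.2
    constructor <;> nlinarith⟩

/-! On singletons the convolution is computed pointwise: `χ_a ⋏ χ_b = χ_{a △ b}`. Since every
`χ_x` lies in `L`, neutrality of `χ_1` gives `χ_{x △ 1} = χ_x`, commutativity gives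
`χ_{1 △ x} = χ_x`, and `x ↦ χ_x` is injective. -/

lemma chi_injective : Function.Injective chi := by
  intro a b hab
  by_contra hne
  have := congrFun hab a
  simp [chi, hne] at this

lemma chi_inL (a : I) : InL (chi a) := by
  refine ⟨le_antisymm (sSup_le ?_) (le_sSup ⟨a, if_pos rfl⟩), ?_⟩
  · rintro _ ⟨t, rfl⟩
    exact le_one'
  · intro x y z hxy hyz
    by_cases hy : y = a
    · simp only [chi, if_pos hy]
      exact le_one'
    have : x ≠ a ∨ z ≠ a := by
      by_contra! hxz
      exact hy (le_antisymm (hxz.2 ▸ hyz) (hxz.1 ▸ hxy))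
    rcases this with hx | hz
    · simp [chi, hx]
    · simp [chi, hz]

namespace IsTnorm

variable {op : I → I → I}

lemma zero_left (h : IsTnorm op) (u : I) : op 0 u = 0 :=
  le_antisymm (by simpa [h.2.2.2.2.2 0] using h.2.2.2.1 0 (le_one' : u ≤ 1)) nonneg'

lemma zero_right (h : IsTnorm op) (u : I) : op u 0 = 0 :=
  le_antisymm (by simpa [h.2.2.2.2.1 0] using h.2.2.1 0 (le_one' : u ≤ 1)) nonneg'

end IsTnorm

lemma conv_chi_chi {star : I → I → I} (hstar : IsTnorm star) (tri : I → I → I) (a b : I) :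
    conv star tri (chi a) (chi b) = chi (tri a b) := by
  funext t
  by_cases ht : t = tri a b
  · have hmem : (1 : I) ∈ {c : I | ∃ y z : I, tri y z = t ∧ c = star (chi a y) (chi b z)} :=
      ⟨a, b, ht.symm, by simp [chi, hstar.2.2.2.2.1 1]⟩
    simp only [conv, chi, if_pos ht]
    exact le_antisymm le_one' (le_sSup hmem)
  · simp only [conv, chi, if_neg ht]
    refine le_antisymm (sSup_le ?_) nonneg'
    rintro _ ⟨y, z, rfl, rfl⟩
    by_cases hy : y = a
    · have hz : z ≠ b := by rintro rfl; exact ht (hy ▸ rfl)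
      simp [hz, hstar.zero_right]
    · simp [hy, hstar.zero_left]

theorem stmt_16_general (star tri : I → I → I) (hstar : IsTnorm star)
    (h : IsTnormOnL (conv star tri)) :
    ∀ x : I, tri 1 x = x ∧ tri x 1 = x := by
  intro x
  obtain ⟨-, comm, -, neutral, -⟩ := h
  have right : chi (tri x 1) = chi x := by
    rw [← conv_chi_chi hstar]
    exact neutral _ (chi_inL x)
  have left : chi (tri 1 x) = chi x := by
    rw [← conv_chi_chi hstar, comm _ _ (chi_inL 1) (chi_inL x), conv_chi_chi hstar, right]
  exact ⟨chi_injective left, chi_injective right⟩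

theorem stmt_16 (star tri : I → I → I) (hstar : IsTnorm star) (hstarc : IsCont star)
    (h : IsTnormOnL (conv star tri)) :
    ∀ x : I, tri 1 x = x ∧ tri x 1 = x :=
  stmt_16_general star tri hstar h
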